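/- With the notation of the previous statement (V* open in Lip(X), γ(φ) ≤ C* on V*, K_φ := ∩_{m≥0} T^m K̂_φ), the set-valued map φ ↦ K_φ on V* is upper semi-continuous: if φ_n → φ in Lip(X) with all φ_n, φ ∈ V*, and x_n ∈ K_{φ_n} with x_n → x, then x ∈ K_φ. Equivalently, for every φ ∈ V* and every open V ⊇ K_φ there is an open neighborhood W of φ in V* such that K_ψ ⊆ V for all ψ ∈ W. -/

import Mathlib

open MeasureTheory Set Metric

section

variable {X : Type*} [MetricSpace X] [MeasurableSpace X]

noncomputable def beta (T : X → X) (φ : X → ℝ) : ℝ :=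
  sSup ((fun μ : Measure X => ∫ x, φ x ∂μ) ''
    {μ : Measure X | IsProbabilityMeasure μ ∧ μ.map T = μ})

/-- the Lipschitz norm `‖φ‖_∞ + lip(φ)` -/
noncomputable def lipNorm (φ : X → ℝ) : ℝ :=
  (⨆ x, |φ x|) + sSup {r : ℝ | ∃ x y : X, x ≠ y ∧ r = |φ x - φ y| / dist x y}

noncomputable def lipDist (φ ψ : X → ℝ) : ℝ := lipNorm (fun x => φ x - ψ x)

/-- `K̂_φ` -/
noncomputable def Khat (T : X → X) (φ : X → ℝ) (Cs : ℝ) : Set X :=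
  {x | ∀ k : ℕ, 1 ≤ k → ∀ l : ℕ,
    |∑ j ∈ Finset.range k, φ (T^[j] (T^[l] x)) - k * beta T φ| ≤ Cs}

/-- `K_φ = ⋂_{m≥0} T^m K̂_φ` -/
noncomputable def Kset (T : X → X) (φ : X → ℝ) (Cs : ℝ) : Set X :=
  ⋂ m : ℕ, T^[m] '' Khat T φ Cs

end

/-! Convergence in `Lip(X)` implies uniform convergence, and `β` is `1`-Lipschitz for the sup
norm, so the Birkhoff-sum inequalities defining `K̂` pass to the limit along convergent points.
For `x ∈ K_φ` one needs, for each `m`, a `T^m`-preimage of `x` in `K̂_φ`: by compactness the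
preimages `yₙ ∈ K̂_{φₙ}` of `xₙ` have a cluster point, which lies in `K̂_φ` and, by continuity of
`T^m`, is mapped to `x`. -/

open Filter Topology

section LipschitzNorm

variable {X : Type*} [MetricSpace X] [CompactSpace X]

lemma abs_le_lipNorm {f : X → ℝ} (hf : Continuous f) (x : X) : |f x| ≤ lipNorm f := by
  have h_sup : |f x| ≤ ⨆ y, |f y| := le_ciSup (isCompact_range hf.abs).bddAbove x
  have h_lip : 0 ≤ sSup {r : ℝ | ∃ x y : X, x ≠ y ∧ r = |f x - f y| / dist x y} := by
    apply Real.sSup_nonneg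
    rintro r ⟨a, b, -, rfl⟩
    positivity
  unfold lipNorm
  linarith

lemma tendstoUniformly_of_tendsto_lipDist {ι : Type*} {l : Filter ι} {F : ι → X → ℝ}
    {f : X → ℝ} (hF : ∀ i, Continuous (F i)) (hf : Continuous f)
    (h : Tendsto (fun i => lipDist (F i) f) l (𝓝 0)) : TendstoUniformly F f l := by
  rw [Metric.tendstoUniformly_iff]
  intro ε hε
  filter_upwards [(tendsto_order.mp h).2 ε hε] with i hi x
  rw [dist_comm, Real.dist_eq]
  exact (abs_le_lipNorm ((hF i).sub hf) x).trans_lt hi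

end LipschitzNorm

section Beta

variable {X : Type*} [MetricSpace X] [CompactSpace X] [MeasurableSpace X] [BorelSpace X]

lemma sSup_integral_le_add {S : Set (Measure X)} (hS : ∀ μ ∈ S, IsProbabilityMeasure μ)
    {f g : X → ℝ} (hf : Continuous f) (hg : Continuous g) {ε : ℝ} (hε : 0 ≤ ε)
    (h : ∀ x, f x ≤ g x + ε) :
    sSup ((fun μ => ∫ x, f x ∂μ) '' S) ≤ sSup ((fun μ => ∫ x, g x ∂μ) '' S) + ε := by
  rcases S.eq_empty_or_nonempty with rfl | hne
  · simpa using hε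
  have h_int : ∀ {u : X → ℝ}, Continuous u → ∀ μ ∈ S, Integrable u μ := fun hu μ hμ =>
    have := hS μ hμ
    hu.integrable_of_hasCompactSupport (HasCompactSupport.of_compactSpace _)
  obtain ⟨C, hC⟩ := (isCompact_range hg).bddAbove
  have h_bdd : BddAbove ((fun μ => ∫ x, g x ∂μ) '' S) := by
    refine ⟨C, ?_⟩
    rintro _ ⟨μ, hμ, rfl⟩
    have := hS μ hμ
    simpa using integral_mono (h_int hg μ hμ) (integrable_const C)
      (fun x => hC (mem_range_self x))
  refine csSup_le (hne.image _) ?_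
  rintro _ ⟨μ, hμ, rfl⟩
  have := hS μ hμ
  calc ∫ x, f x ∂μ ≤ ∫ x, (g x + ε) ∂μ :=
        integral_mono (h_int hf μ hμ) ((h_int hg μ hμ).add (integrable_const ε)) h
    _ = ∫ x, g x ∂μ + ε := by
        simp [integral_add (h_int hg μ hμ) (integrable_const ε)]
    _ ≤ _ := by gcongr; exact le_csSup h_bdd ⟨μ, hμ, rfl⟩

lemma beta_le_add (T : X → X) {f g : X → ℝ} (hf : Continuous f) (hg : Continuous g)
    {ε : ℝ} (hε : 0 ≤ ε) (h : ∀ x, f x ≤ g x + ε) : beta T f ≤ beta T g + ε :=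
  sSup_integral_le_add (fun _ hμ => hμ.1) hf hg hε h

lemma abs_beta_sub_le (T : X → X) {f g : X → ℝ} (hf : Continuous f) (hg : Continuous g)
    {ε : ℝ} (hε : 0 ≤ ε) (h : ∀ x, |f x - g x| ≤ ε) :
    |beta T f - beta T g| ≤ ε := by
  rw [abs_sub_le_iff]
  constructor
  · linarith [beta_le_add T hf hg hε fun x => by linarith [(abs_le.mp (h x)).2]]
  · linarith [beta_le_add T hg hf hε fun x => by linarith [(abs_le.mp (h x)).1]]

lemma tendsto_beta_of_tendstoUniformly (T : X → X) {ι : Type*} {l : Filter ι}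
    {F : ι → X → ℝ} {f : X → ℝ} (hF : ∀ i, Continuous (F i)) (hf : Continuous f)
    (h : TendstoUniformly F f l) : Tendsto (fun i => beta T (F i)) l (𝓝 (beta T f)) := by
  rw [Metric.tendsto_nhds]
  intro ε hε
  filter_upwards [Metric.tendstoUniformly_iff.mp h (ε / 2) (half_pos hε)] with i hi
  rw [Real.dist_eq]
  refine (abs_beta_sub_le T (hF i) hf (half_pos hε).le fun x => ?_).trans_lt (half_lt_self hε)
  rw [← Real.dist_eq, dist_comm]
  exact (hi x).le

end Beta

section Limits

variable {X : Type*} [MetricSpace X] [MeasurableSpace X] {T : X → X} {Cs : ℝ}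
  {ι : Type*} {l : Filter ι} [NeBot l] {F : ι → X → ℝ} {f : X → ℝ}

lemma mem_Khat_of_tendsto (hT : Continuous T) (hf : Continuous f)
    (hF : TendstoUniformly F f l) (hβ : Tendsto (fun i => beta T (F i)) l (𝓝 (beta T f)))
    {y : ι → X} {z : X} (hy : ∀ i, y i ∈ Khat T (F i) Cs) (hyz : Tendsto y l (𝓝 z)) :
    z ∈ Khat T f Cs := by
  intro k hk m
  have h_sum : Tendsto (fun i => ∑ j ∈ Finset.range k, F i (T^[j] (T^[m] (y i)))) l
      (𝓝 (∑ j ∈ Finset.range k, f (T^[j] (T^[m] z)))) :=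
    tendsto_finsetSum _ fun j _ =>
      hF.tendsto_comp hf.continuousAt
        ((((hT.iterate j).comp (hT.iterate m)).tendsto z).comp hyz)
  exact le_of_tendsto ((h_sum.sub (hβ.const_mul (k : ℝ))).abs)
    (Eventually.of_forall fun i => hy i k hk m)

lemma mem_Kset_of_tendsto [CompactSpace X] (hT : Continuous T) (hf : Continuous f)
    (hF : TendstoUniformly F f l) (hβ : Tendsto (fun i => beta T (F i)) l (𝓝 (beta T f)))
    {x : ι → X} {p : X} (hx : ∀ i, x i ∈ Kset T (F i) Cs) (hxp : Tendsto x l (𝓝 p)) :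
    p ∈ Kset T f Cs := by
  refine mem_iInter.mpr fun m => ?_
  choose y hy hTy using fun i => mem_iInter.mp (hx i) m
  obtain ⟨z, hz⟩ := exists_clusterPt_of_compactSpace (map y l)
  obtain ⟨U, hUl, hyz⟩ := mapClusterPt_iff_ultrafilter.mp hz
  refine ⟨z, mem_Khat_of_tendsto hT hf (fun u hu => hUl (hF u hu)) (hβ.mono_left hUl) hy hyz,
    ?_⟩
  have h_image : Tendsto (fun i => T^[m] (y i)) U (𝓝 (T^[m] z)) :=
    ((hT.iterate m).tendsto z).comp hyz
  simp only [hTy] at h_image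
  exact tendsto_nhds_unique h_image (hxp.mono_left hUl)

end Limits

theorem stmt11_general {X : Type*} [MetricSpace X] [CompactSpace X]
    [MeasurableSpace X] [BorelSpace X]
    (T : X → X) (hT : Continuous T)
    (Cs : ℝ)
    (Vs : Set (X → ℝ))
    (hVlip : ∀ φ ∈ Vs, ∃ K : NNReal, LipschitzWith K φ)
    (φseq : ℕ → X → ℝ) (φ : X → ℝ)
    (hseq : ∀ n, φseq n ∈ Vs) (hφ : φ ∈ Vs)
    (hconv : Filter.Tendsto (fun n => lipDist (φseq n) φ) Filter.atTop (nhds 0))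
    (xseq : ℕ → X) (x : X)
    (hx : ∀ n, xseq n ∈ Kset T (φseq n) Cs)
    (hxconv : Filter.Tendsto xseq Filter.atTop (nhds x)) :
    x ∈ Kset T φ Cs := by
  have hcont : ∀ ψ ∈ Vs, Continuous ψ := fun ψ hψ =>
    (hVlip ψ hψ).choose_spec.continuous
  have hunif : TendstoUniformly φseq φ atTop :=
    tendstoUniformly_of_tendsto_lipDist (fun n => hcont _ (hseq n)) (hcont φ hφ) hconv
  exact mem_Kset_of_tendsto hT (hcont φ hφ) hunif
    (tendsto_beta_of_tendstoUniformly T (fun n => hcont _ (hseq n)) (hcont φ hφ) hunif)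
    hx hxconv

/-- upper semi-continuity of `φ ↦ K_φ`: if `φₙ → φ` in `Lip(X)`
(all lying in `V*` where `γ ≤ C*`), `xₙ ∈ K_{φₙ}` and `xₙ → x`, then `x ∈ K_φ`. -/
theorem stmt11 {X : Type*} [MetricSpace X] [CompactSpace X]
    [MeasurableSpace X] [BorelSpace X]
    (T : X → X) (hT : Continuous T)
    (Cs : ℝ) (hCs : 0 < Cs)
    (Vs : Set (X → ℝ))
    (hVlip : ∀ φ ∈ Vs, ∃ K : NNReal, LipschitzWith K φ)
    (hVγ : ∀ φ ∈ Vs, ∀ n : ℕ, 1 ≤ n → ∀ x : X,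
      ∑ k ∈ Finset.range n, φ (T^[k] x) - n * beta T φ ≤ Cs)
    (φseq : ℕ → X → ℝ) (φ : X → ℝ)
    (hseq : ∀ n, φseq n ∈ Vs) (hφ : φ ∈ Vs)
    (hconv : Filter.Tendsto (fun n => lipDist (φseq n) φ) Filter.atTop (nhds 0))
    (xseq : ℕ → X) (x : X)
    (hx : ∀ n, xseq n ∈ Kset T (φseq n) Cs)
    (hxconv : Filter.Tendsto xseq Filter.atTop (nhds x)) :
    x ∈ Kset T φ Cs :=
  stmt11_general T hT Cs Vs hVlip φseq φ hseq hφ hconv xseq x hx hxconv
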